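/- For every δ > 0 there is a constant C_δ > 0 such that ∫_{ℝ³} (1+|x|)^{-5/2} (1+|x|-x₁)^{-1/2-2δ} dx ≤ C_δ. In particular, any measurable function f on ℝ³ with |f(x)| ≤ M (1+|x|)^{-5/2}(1+|x|-x₁)^{-1/2-2δ} for all x is integrable with ∫|f| ≤ C_δ M. -/

import Mathlib

/-!
Write `x = (x₀, x₁, x₂)`, so that the paper's wake direction `x₁` is `x 0` here. The weight is
dominated by the integrable product `(1+|x₀|)^(-(1+δ)) (1+|x₁|)^(-(1+δ/2)) (1+|x₂|)^(-(1+δ/2))`.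
The transverse coordinates are controlled by the wake factor: `x₁² + x₂² = (|x| - x₀)(|x| + x₀)`,
so `(1+|x₁|)(1+|x₂|) ≤ 4 (1+|x|)(1+|x|-x₀)`. Bounding the power `1/2 + 2δ` of the transverse
product this way and the remaining power `(1 - 3δ)/2` by `(1+|x|)²` costs exactly `(1+|x|)^(5/2)`.
This needs `δ ≤ 1/3`; larger `δ` reduce to `δ = 1/3` because the weight decreases in `δ`.
-/

open MeasureTheory Real

theorem integrable_prod_one_add_abs_rpow_neg {ι : Type*} [Fintype ι] {p : ι → ℝ}
    (hp : ∀ i, 1 < p i) :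
    Integrable (fun x : EuclideanSpace ℝ ι => ∏ i, (1 + |x i|) ^ (-p i)) := by
  have hpi : Integrable (fun y : ι → ℝ => ∏ i, (1 + |y i|) ^ (-p i)) :=
    Integrable.fintype_prod (f := fun i (t : ℝ) => (1 + |t|) ^ (-p i)) fun i => by
      simpa [Real.norm_eq_abs] using
        integrable_one_add_norm (E := ℝ) (μ := volume) (r := p i) (by simpa using hp i)
  exact (PiLp.volume_preserving_ofLp ι).integrable_comp_emb
    (MeasurableEquiv.toLp 2 (ι → ℝ)).symm.measurableEmbedding |>.mpr hpi

theorem rpow_neg_mul_rpow_neg_le {a b c u p q s : ℝ} (hc : 0 < c) (hca : c ≤ a) (hb : 0 < b)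
    (hu : 0 < u) (hub : u ≤ 4 * (a * b)) (hua : u ≤ a ^ 2) (hp : 0 ≤ p) (hs : 0 ≤ s)
    (hsq : s ≤ q) :
    a ^ (-(p + 2 * q - s)) * b ^ (-s) ≤ 4 ^ s * (c ^ (-p) * u ^ (-q)) := by
  have ha : 0 < a := hc.trans_le hca
  have hsplit : u ^ q = u ^ s * u ^ (q - s) := by
    rw [← rpow_add_of_nonneg hu.le hs (sub_nonneg.2 hsq), add_sub_cancel]
  have hdom : c ^ p * u ^ q ≤ 4 ^ s * (a ^ (p + 2 * q - s) * b ^ s) := calc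
    c ^ p * u ^ q ≤ a ^ p * ((4 * (a * b)) ^ s * (a ^ (2 : ℝ)) ^ (q - s)) := by
        rw [hsplit, rpow_two]
        gcongr
    _ = 4 ^ s * (a ^ (p + 2 * q - s) * b ^ s) := by
        rw [mul_rpow (by norm_num) (by positivity), mul_rpow ha.le hb.le, ← rpow_mul ha.le,
          show p + 2 * q - s = p + s + 2 * (q - s) by ring,
          rpow_add_of_nonneg ha.le (by positivity) (by linarith),
          rpow_add_of_nonneg ha.le hp hs]
        ring
  rw [rpow_neg ha.le, rpow_neg hb.le, rpow_neg hc.le, rpow_neg hu.le, ← mul_inv, ← mul_inv,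
    ← div_eq_mul_inv, le_div_iff₀ (by positivity), inv_mul_le_iff₀ (by positivity)]
  linarith

theorem one_le_one_add_norm_sub_apply (x : EuclideanSpace ℝ (Fin 3)) : 1 ≤ 1 + ‖x‖ - x 0 := by
  linarith [(le_abs_self (x 0)).trans (PiLp.norm_apply_le x 0)]

theorem one_add_abs_mul_one_add_abs_le (x : EuclideanSpace ℝ (Fin 3)) :
    (1 + |x 1|) * (1 + |x 2|) ≤ 4 * ((1 + ‖x‖) * (1 + ‖x‖ - x 0)) := by
  have hperp : |x 1| ^ 2 + |x 2| ^ 2 = (‖x‖ - x 0) * (‖x‖ + x 0) := by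
    have hnorm : ‖x‖ ^ 2 = x 0 ^ 2 + x 1 ^ 2 + x 2 ^ 2 := by
      simp [EuclideanSpace.norm_sq_eq, Fin.sum_univ_three]
    rw [sq_abs, sq_abs]
    linear_combination -hnorm
  have hwake := one_le_one_add_norm_sub_apply x
  calc (1 + |x 1|) * (1 + |x 2|) ≤ 2 * (1 + (|x 1| ^ 2 + |x 2| ^ 2)) := by
        nlinarith [sq_nonneg (|x 1| - 1), sq_nonneg (|x 2| - 1), sq_nonneg (|x 1| - |x 2|)]
    _ ≤ 2 * (1 + (‖x‖ - x 0) * (2 * ‖x‖)) := by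
        rw [hperp]
        gcongr <;> linarith
    _ ≤ 4 * ((1 + ‖x‖) * (1 + ‖x‖ - x 0)) := by nlinarith [norm_nonneg x]

noncomputable def wakeWeight (δ : ℝ) (x : EuclideanSpace ℝ (Fin 3)) : ℝ :=
  (1 + ‖x‖) ^ (-(5 : ℝ)/2) * (1 + ‖x‖ - x 0) ^ (-(1:ℝ)/2 - 2*δ)

theorem wakeWeight_pos (δ : ℝ) (x : EuclideanSpace ℝ (Fin 3)) : 0 < wakeWeight δ x := by
  have := one_le_one_add_norm_sub_apply x
  unfold wakeWeight
  positivity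

theorem wakeWeight_anti {δ δ' : ℝ} (h : δ' ≤ δ) (x : EuclideanSpace ℝ (Fin 3)) :
    wakeWeight δ x ≤ wakeWeight δ' x := by
  unfold wakeWeight
  gcongr
  exact one_le_one_add_norm_sub_apply x

theorem wakeWeight_le_prod {δ : ℝ} (hδ : 0 ≤ δ) (hδ' : δ ≤ 1 / 3)
    (x : EuclideanSpace ℝ (Fin 3)) :
    wakeWeight δ x ≤
      4 ^ (1 / 2 + 2 * δ) * ∏ i, (1 + |x i|) ^ (-![1 + δ, 1 + δ / 2, 1 + δ / 2] i) := by
  have hx0 : |x 0| ≤ ‖x‖ := PiLp.norm_apply_le x 0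
  have hu : (1 + |x 1|) * (1 + |x 2|) ≤ (1 + ‖x‖) ^ 2 := by
    have hx1 : |x 1| ≤ ‖x‖ := PiLp.norm_apply_le x 1
    have hx2 : |x 2| ≤ ‖x‖ := PiLp.norm_apply_le x 2
    rw [sq]
    gcongr
  have key := rpow_neg_mul_rpow_neg_le (p := 1 + δ) (q := 1 + δ / 2) (s := 1 / 2 + 2 * δ)
    (by positivity) (by linarith : 1 + |x 0| ≤ 1 + ‖x‖)
    (zero_lt_one.trans_le (one_le_one_add_norm_sub_apply x)) (by positivity)
    (one_add_abs_mul_one_add_abs_le x) hu (by linarith) (by linarith) (by linarith)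
  simp only [Fin.prod_univ_three, Matrix.cons_val_zero, Matrix.cons_val_one, Matrix.cons_val_two,
    Matrix.head_cons, Matrix.tail_cons]
  unfold wakeWeight
  rw [mul_assoc _ ((1 + |x 1|) ^ _), ← mul_rpow (by positivity) (by positivity)]
  convert key using 3 <;> ring

theorem integrable_wakeWeight {δ : ℝ} (hδ : 0 < δ) : Integrable (wakeWeight δ) := by
  set ε := min δ (1 / 3)
  have hε : 0 < ε := lt_min hδ (by norm_num)
  have hdom := (integrable_prod_one_add_abs_rpow_neg (p := ![1 + ε, 1 + ε / 2, 1 + ε / 2])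
    fun i => by fin_cases i <;> simp [hε]).const_mul (4 ^ (1 / 2 + 2 * ε))
  refine hdom.mono' (by unfold wakeWeight; fun_prop) (ae_of_all _ fun x => ?_)
  rw [norm_of_nonneg (wakeWeight_pos δ x).le]
  exact (wakeWeight_anti (min_le_left _ _) x).trans
    (wakeWeight_le_prod hε.le (min_le_right _ _) x)

theorem stmt_0 (δ : ℝ) (hδ : 0 < δ) :
    ∃ C : ℝ, 0 < C ∧
      (∫⁻ x : EuclideanSpace ℝ (Fin 3),
          ENNReal.ofReal ((1 + ‖x‖) ^ (-(5 : ℝ)/2) * (1 + ‖x‖ - x 0) ^ (-(1:ℝ)/2 - 2*δ))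
        ≤ ENNReal.ofReal C) ∧
      ∀ (f : EuclideanSpace ℝ (Fin 3) → ℝ) (M : ℝ), 0 ≤ M → Measurable f →
        (∀ x, |f x| ≤ M * ((1 + ‖x‖) ^ (-(5 : ℝ)/2) * (1 + ‖x‖ - x 0) ^ (-(1:ℝ)/2 - 2*δ))) →
        Integrable f ∧ ∫ x, |f x| ≤ C * M := by
  have hw := integrable_wakeWeight hδ
  have hw0 : 0 ≤ wakeWeight δ := fun x => (wakeWeight_pos δ x).le
  refine ⟨∫ x, wakeWeight δ x, ?_, ?_, fun f M _ hf hfw => ?_⟩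
  · refine (integral_pos_iff_support_of_nonneg hw0 hw).2 ?_
    rw [Function.support_eq_univ fun x => (wakeWeight_pos δ x).ne']
    exact Measure.measure_univ_pos.2 (NeZero.ne _)
  · exact (ofReal_integral_eq_lintegral_ofReal hw (ae_of_all _ hw0)).ge
  · have hMw := hw.const_mul M
    have hfint : Integrable f := hMw.mono' hf.aestronglyMeasurable (ae_of_all _ hfw)
    refine ⟨hfint, ?_⟩
    calc ∫ x, |f x| ≤ ∫ x, M * wakeWeight δ x := integral_mono hfint.abs hMw hfw
      _ = (∫ x, wakeWeight δ x) * M := by rw [integral_const_mul, mul_comm]
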